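/- arXiv:2206.14647 — 3 statements merged into one kernel-verified Lean document; each statement's English description precedes it below -/
import Mathlib

section
/- Let f : ℝ^p → ℝ be C¹ with L-Lipschitz gradient, bounded below, and suppose gradient descent z_i = z_{i-1} - γ_i ∇f(z_{i-1}) is run with step sizes satisfying Σγ_i = ∞ and Σγ_i² < ∞. Then liminf_{i→∞} ‖∇f(z_{i-1})‖² = 0. -/
open Filter Topology RealInnerProductSpace

/-!
Along a gradient step `x ↦ x - t • ∇f x` with `K t ≤ 1/2`, where `K` is a Lipschitz constant of
`∇f`, the value of `f` drops by at least `t ‖∇f x‖² / 2`. Since `γ_i → 0` this applies to all late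
steps, so `f` bounded below makes `Σ γ_i ‖∇f(z_{i-1})‖²` summable. If `‖∇f(z_{i-1})‖²` stayed above
some `ε > 0`, this would force `Σ γ_i < ∞`.
-/

open scoped NNReal Gradient

section Descent

variable {E : Type*} [NormedAddCommGroup E] [InnerProductSpace ℝ E] [CompleteSpace E]
  {f : E → ℝ} {K : ℝ≥0}

theorem abs_sub_sub_inner_gradient_le (hf : Differentiable ℝ f) (hK : LipschitzWith K (∇ f))
    (x y : E) : |f y - f x - ⟪∇ f x, y - x⟫| ≤ K * ‖y - x‖ ^ 2 := by
  have hmvt : ‖f y - f x - fderiv ℝ f x (y - x)‖ ≤ K * ‖y - x‖ * ‖y - x‖ := by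
    refine (convex_closedBall x ‖y - x‖).norm_image_sub_le_of_norm_fderiv_le'
      (fun w _ => hf w) (fun w hw => ?_) (Metric.mem_closedBall_self (norm_nonneg _))
      (mem_closedBall_iff_norm.mpr le_rfl)
    rw [← toDual_gradient, ← toDual_gradient, ← map_sub, LinearIsometryEquiv.norm_map,
      ← dist_eq_norm]
    calc dist (∇ f w) (∇ f x) ≤ K * dist w x := hK.dist_le_mul w x
      _ ≤ K * ‖y - x‖ := by gcongr; exact hw
  rw [inner_gradient_left, sq, ← mul_assoc]
  exact hmvt

theorem mul_norm_gradient_sq_le_of_lipschitzWith (hf : Differentiable ℝ f)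
    (hK : LipschitzWith K (∇ f)) (x : E) {t : ℝ} (ht : 0 ≤ t) (hKt : K * t ≤ 1 / 2) :
    t * ‖∇ f x‖ ^ 2 ≤ 2 * (f x - f (x - t • ∇ f x)) := by
  have hquad := (le_abs_self _).trans (abs_sub_sub_inner_gradient_le hf hK x (x - t • ∇ f x))
  have hdisp : x - t • ∇ f x - x = -(t • ∇ f x) := sub_sub_cancel_left _ _
  rw [hdisp, inner_neg_right, real_inner_smul_right, real_inner_self_eq_norm_sq, norm_neg,
    norm_smul, Real.norm_of_nonneg ht] at hquad
  nlinarith [mul_nonneg ht (sq_nonneg ‖∇ f x‖)]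

end Descent

theorem summable_of_le_sub_succ {c F : ℕ → ℝ} {m : ℝ} (hc : ∀ n, 0 ≤ c n)
    (hcF : ∀ n, c n ≤ F n - F (n + 1)) (hF : ∀ n, m ≤ F n) : Summable c := by
  refine summable_of_sum_range_le (c := F 0 - m) hc fun n => ?_
  calc ∑ i ∈ Finset.range n, c i ≤ ∑ i ∈ Finset.range n, (F i - F (i + 1)) :=
        Finset.sum_le_sum fun i _ => hcF i
    _ = F 0 - F n := Finset.sum_range_sub' F n
    _ ≤ F 0 - m := by linarith [hF n]

theorem not_summable_of_tendsto_sum_Icc {γ : ℕ → ℝ} (hγ : ∀ i, 0 ≤ γ i)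
    (hdiv : Tendsto (fun k => ∑ i ∈ Finset.Icc 1 k, γ i) atTop atTop) : ¬Summable γ := by
  intro hsum
  obtain ⟨k, hk⟩ := (hdiv.eventually_gt_atTop (∑' i, γ i)).exists
  exact hk.not_ge (hsum.sum_le_tsum _ fun i _ => hγ i)

theorem frequently_le_of_summable_mul {a γ : ℕ → ℝ} (hγ : ∀ i, 0 ≤ γ i) (hγs : ¬Summable γ)
    (h : Summable fun i => γ i * a i) {ε : ℝ} (hε : 0 < ε) : ∃ᶠ i in atTop, a i ≤ ε := by
  by_contra hfreq
  have hlarge : ∀ᶠ i in atTop, ε < a i := by simpa only [not_frequently, not_le] using hfreq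
  refine hγs ((summable_mul_left_iff hε.ne').mp ?_)
  refine h.norm.of_norm_bounded_eventually_nat ?_
  filter_upwards [hlarge] with i hi
  rw [Real.norm_of_nonneg (mul_nonneg hε.le (hγ i)), Real.norm_eq_abs, mul_comm]
  exact (mul_le_mul_of_nonneg_left hi.le (hγ i)).trans (le_abs_self _)

theorem liminf_eq_zero_of_frequently_le {ι : Type*} {l : Filter ι} [l.NeBot] {a : ι → ℝ}
    (ha : ∀ i, 0 ≤ a i) (hsmall : ∀ ε > 0, ∃ᶠ i in l, a i ≤ ε) : liminf a l = 0 := by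
  have hbdd : IsBoundedUnder (· ≥ ·) l a := isBoundedUnder_of ⟨0, ha⟩
  refine le_antisymm (le_of_forall_pos_le_add fun ε hε => ?_) (le_liminf_of_le ?_ (.of_forall ha))
  · simpa only [zero_add] using liminf_le_of_frequently_le (hsmall ε hε) hbdd
  · refine ⟨1, fun c hc => ?_⟩
    obtain ⟨i, hci, hi⟩ := ((eventually_map.mp hc).and_frequently (hsmall 1 one_pos)).exists
    exact hci.trans hi

theorem tendsto_zero_of_summable_sq {γ : ℕ → ℝ} (h : Summable fun i => γ i ^ 2) :
    Tendsto γ atTop (𝓝 0) := by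
  have habs := h.tendsto_atTop_zero.sqrt
  simp only [Real.sqrt_sq_eq_abs, Real.sqrt_zero] at habs
  exact (tendsto_zero_iff_abs_tendsto_zero γ).mpr habs

theorem gd_liminf_grad_zero_general
    (p : ℕ) (f : EuclideanSpace ℝ (Fin p) → ℝ) (L fstar : ℝ)
    (hf : ContDiff ℝ 1 f)
    (hLip : ∀ z_w z_u : EuclideanSpace ℝ (Fin p),
      ‖gradient f z_w - gradient f z_u‖ ≤ L * ‖z_w - z_u‖)
    (hbelow : ∀ z, fstar ≤ f z)
    (γ : ℕ → ℝ) (hγ : ∀ i, 0 < γ i)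
    (hdiv : Tendsto (fun k => ∑ i ∈ Finset.Icc 1 k, γ i) atTop atTop)
    (hsq : Summable (fun i => γ i ^ 2))
    (z : ℕ → EuclideanSpace ℝ (Fin p))
    (hz : ∀ i : ℕ, 1 ≤ i → z i = z (i - 1) - γ i • gradient f (z (i - 1))) :
    Filter.liminf (fun i => ‖gradient f (z (i - 1))‖ ^ 2) atTop = 0 := by
  have hK : LipschitzWith L.toNNReal (∇ f) :=
    .of_dist_le' fun x y => by simpa only [dist_eq_norm] using hLip x y
  have hsmall : ∀ᶠ i in atTop, L.toNNReal * γ i ≤ 1 / 2 :=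
    ((tendsto_zero_of_summable_sq hsq).const_mul _).eventually_le_const
      (by rw [mul_zero]; norm_num)
  obtain ⟨N, hN⟩ := hsmall.exists_forall_of_atTop
  have hdecrease : ∀ n, γ (n + (N + 1)) * ‖∇ f (z (n + (N + 1) - 1))‖ ^ 2
      ≤ 2 * f (z (n + N)) - 2 * f (z (n + 1 + N)) := by
    intro n
    have hstep := hz (n + (N + 1)) (by omega)
    rw [show n + (N + 1) - 1 = n + N by omega] at hstep ⊢
    rw [show n + 1 + N = n + (N + 1) by omega, hstep, ← mul_sub]
    exact mul_norm_gradient_sq_le_of_lipschitzWith (hf.differentiable one_ne_zero) hK _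
      (hγ _).le (hN _ (by omega))
  have hsum : Summable fun i => γ i * ‖∇ f (z (i - 1))‖ ^ 2 :=
    (summable_nat_add_iff (N + 1)).mp <| summable_of_le_sub_succ (m := 2 * fstar)
      (fun n => mul_nonneg (hγ _).le (sq_nonneg _)) hdecrease
      (fun n => by linarith [hbelow (z (n + N))])
  exact liminf_eq_zero_of_frequently_le (fun i => sq_nonneg _) fun ε hε =>
    frequently_le_of_summable_mul (fun i => (hγ i).le)
      (not_summable_of_tendsto_sum_Icc (fun i => (hγ i).le) hdiv) hsum hε

/-- For gradient descent with `Σγ_i = ∞` and `Σγ_i² < ∞` on a function with Lipschitz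
gradient that is bounded below, `liminf ‖∇f(z_{i-1})‖² = 0`. -/
theorem gd_liminf_grad_zero
    (p : ℕ) (f : EuclideanSpace ℝ (Fin p) → ℝ) (L fstar : ℝ)
    (hf : ContDiff ℝ 1 f) (hL : 0 < L)
    (hLip : ∀ z_w z_u : EuclideanSpace ℝ (Fin p),
      ‖gradient f z_w - gradient f z_u‖ ≤ L * ‖z_w - z_u‖)
    (hbelow : ∀ z, fstar ≤ f z)
    (γ : ℕ → ℝ) (hγ : ∀ i, 0 < γ i)
    (hdiv : Tendsto (fun k => ∑ i ∈ Finset.Icc 1 k, γ i) atTop atTop)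
    (hsq : Summable (fun i => γ i ^ 2))
    (z : ℕ → EuclideanSpace ℝ (Fin p))
    (hz : ∀ i : ℕ, 1 ≤ i → z i = z (i - 1) - γ i • gradient f (z (i - 1))) :
    Filter.liminf (fun i => ‖gradient f (z (i - 1))‖ ^ 2) atTop = 0 :=
  gd_liminf_grad_zero_general p f L fstar hf hLip hbelow γ hγ hdiv hsq z hz
end

section
/- Let f : ℝ^p → ℝ be C¹ with L-Lipschitz gradient and bounded below by f*, run gradient descent z_i = z_{i-1} - γ_i ∇f(z_{i-1}) with γ_i = i^{-1/2} for i ≥ 1, and assume additionally ‖∇f(z)‖ ≤ C₀ for all z. Then min_{0 ≤ j < k} ‖∇f(z_j)‖² ≤ (f(z_0) - f* + (L C₀²/2)(1 + log k)) / √k for all k ≥ 1. -/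
/-! The descent lemma for an `L`-Lipschitz gradient gives, for the step `z_{j+1} = z_j - γ_j ∇f(z_j)`,
`γ_j ‖∇f(z_j)‖² ≤ f(z_j) - f(z_{j+1}) + (L/2) γ_j² ‖∇f(z_j)‖²`. Summing over `j < k` telescopes
`f` down to `f(z₀) - f*`, while `γ_j² ‖∇f(z_j)‖² ≤ C₀² / (j+1)` sums to at most `C₀² (1 + log k)`.
The left-hand side is at least `min_j ‖∇f(z_j)‖² · Σ γ_j ≥ min_j ‖∇f(z_j)‖² · √k`. -/

open Finset

theorem le_add_fderiv_add_half_mul_norm_sq {E : Type*} [NormedAddCommGroup E] [NormedSpace ℝ E]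
    {f : E → ℝ} {f' : E → E →L[ℝ] ℝ} {L : ℝ} (hf : ∀ x, HasFDerivAt f (f' x) x)
    (hLip : ∀ a b, ‖f' a - f' b‖ ≤ L * ‖a - b‖) (x y : E) :
    f y ≤ f x + f' x (y - x) + L / 2 * ‖y - x‖ ^ 2 := by
  set v := y - x
  let g : ℝ → ℝ := fun t => f (x + t • v) - t * f' x v - L / 2 * t ^ 2 * ‖v‖ ^ 2
  have hg : ∀ t, HasDerivAt g ((f' (x + t • v) - f' x) v - L * t * ‖v‖ ^ 2) t := by
    intro t
    have hline : HasDerivAt (fun s : ℝ => x + s • v) v t := by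
      simpa using ((hasDerivAt_id t).smul_const v).const_add x
    have hg' := (((hf _).comp_hasDerivAt t hline).sub ((hasDerivAt_id t).mul_const (f' x v))).sub
      (((hasDerivAt_pow 2 t).const_mul (L / 2)).mul_const (‖v‖ ^ 2))
    exact hg'.congr_deriv (by simp only [FunLike.coe_sub, Pi.sub_apply]; ring)
  obtain ⟨c, hc, hgc⟩ := exists_hasDerivAt_eq_slope g _ zero_lt_one
    (fun t _ => (hg t).continuousAt.continuousWithinAt) (fun t _ => hg t)
  have hslope : (f' (x + c • v) - f' x) v - L * c * ‖v‖ ^ 2 ≤ 0 := calc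
    _ ≤ ‖f' (x + c • v) - f' x‖ * ‖v‖ - L * c * ‖v‖ ^ 2 := by
      gcongr; exact (le_abs_self _).trans ((f' (x + c • v) - f' x).le_opNorm v)
    _ ≤ L * ‖x + c • v - x‖ * ‖v‖ - L * c * ‖v‖ ^ 2 := by gcongr; exact hLip _ _
    _ = 0 := by
      rw [add_sub_cancel_left, norm_smul, Real.norm_of_nonneg hc.1.le]; ring
  have hg01 : g 1 ≤ g 0 := by
    rw [hgc] at hslope; simpa using hslope
  simp only [g, one_smul, zero_smul, add_zero, one_mul, one_pow, zero_mul, zero_pow two_ne_zero,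
    mul_zero, sub_zero] at hg01
  rw [add_sub_cancel] at hg01
  linarith

section GradientDescent

variable {F : Type*} [NormedAddCommGroup F] [InnerProductSpace ℝ F] [CompleteSpace F]
  {f : F → ℝ} {L : ℝ}

theorem le_add_inner_gradient_add_half_mul_norm_sq (hf : Differentiable ℝ f)
    (hLip : ∀ a b, ‖gradient f a - gradient f b‖ ≤ L * ‖a - b‖) (x y : F) :
    f y ≤ f x + inner ℝ (gradient f x) (y - x) + L / 2 * ‖y - x‖ ^ 2 := by
  have hdual : ∀ a b, ‖InnerProductSpace.toDual ℝ F (gradient f a)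
      - InnerProductSpace.toDual ℝ F (gradient f b)‖ ≤ L * ‖a - b‖ := fun a b => by
    rw [← map_sub, LinearIsometryEquiv.norm_map]; exact hLip a b
  simpa using le_add_fderiv_add_half_mul_norm_sq
    (fun a => hasGradientAt_iff_hasFDerivAt.mp (hf a).hasGradientAt) hdual x y

theorem apply_sub_smul_gradient_le (hf : Differentiable ℝ f)
    (hLip : ∀ a b, ‖gradient f a - gradient f b‖ ≤ L * ‖a - b‖) (x : F) (γ : ℝ) :
    f (x - γ • gradient f x) ≤
      f x - γ * ‖gradient f x‖ ^ 2 + L / 2 * (γ ^ 2 * ‖gradient f x‖ ^ 2) := by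
  have h := le_add_inner_gradient_add_half_mul_norm_sq hf hLip x (x - γ • gradient f x)
  rwa [sub_sub_cancel_left, inner_neg_right, real_inner_smul_right, real_inner_self_eq_norm_sq,
    norm_neg, norm_smul, mul_pow, Real.norm_eq_abs, sq_abs, ← sub_eq_add_neg] at h

theorem sum_mul_norm_sq_gradient_le (hf : Differentiable ℝ f)
    (hLip : ∀ a b, ‖gradient f a - gradient f b‖ ≤ L * ‖a - b‖) {z : ℕ → F} {γ : ℕ → ℝ}
    (hz : ∀ j, z (j + 1) = z j - γ j • gradient f (z j)) (k : ℕ) :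
    ∑ j ∈ range k, γ j * ‖gradient f (z j)‖ ^ 2 ≤
      f (z 0) - f (z k) + L / 2 * ∑ j ∈ range k, γ j ^ 2 * ‖gradient f (z j)‖ ^ 2 := by
  have hstep : ∀ j, γ j * ‖gradient f (z j)‖ ^ 2 ≤
      (f (z j) - f (z (j + 1))) + L / 2 * (γ j ^ 2 * ‖gradient f (z j)‖ ^ 2) := fun j => by
    have := apply_sub_smul_gradient_le hf hLip (z j) (γ j)
    rw [← hz] at this
    linarith
  calc ∑ j ∈ range k, γ j * ‖gradient f (z j)‖ ^ 2
      ≤ ∑ j ∈ range k,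
          ((f (z j) - f (z (j + 1))) + L / 2 * (γ j ^ 2 * ‖gradient f (z j)‖ ^ 2)) :=
        sum_le_sum fun j _ => hstep j
    _ = _ := by rw [sum_add_distrib, sum_range_sub', mul_sum]

end GradientDescent

theorem sqrt_le_sum_range_rpow_neg_half (k : ℕ) :
    √(k : ℝ) ≤ ∑ j ∈ range k, ((j : ℝ) + 1) ^ (-(1 / 2 : ℝ)) := by
  rcases k.eq_zero_or_pos with rfl | hk
  · simp
  have hk' : (0 : ℝ) < k := Nat.cast_pos.mpr hk
  have hterm : ∀ j ∈ range k, (k : ℝ) ^ (-(1 / 2 : ℝ)) ≤ ((j : ℝ) + 1) ^ (-(1 / 2 : ℝ)) :=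
    fun j hj => Real.rpow_le_rpow_of_nonpos (by positivity)
      (by exact_mod_cast mem_range.mp hj) (by norm_num)
  calc √(k : ℝ) = k * (k : ℝ) ^ (-(1 / 2 : ℝ)) := by
        rw [Real.sqrt_eq_rpow, ← Real.rpow_one_add' hk'.le (by norm_num)]; norm_num
    _ ≤ _ := by simpa using card_nsmul_le_sum _ _ _ hterm

theorem sum_range_inv_succ_le_one_add_log (k : ℕ) :
    ∑ j ∈ range k, ((j : ℝ) + 1)⁻¹ ≤ 1 + Real.log k := by
  have h := harmonic_le_one_add_log k
  simp only [harmonic] at h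
  push_cast at h
  exact h

theorem Finset.inf'_mul_sum_le_sum_mul {ι : Type*} {s : Finset ι} (hs : s.Nonempty) (a w : ι → ℝ)
    (hw : ∀ i ∈ s, 0 ≤ w i) : s.inf' hs a * ∑ i ∈ s, w i ≤ ∑ i ∈ s, w i * a i := by
  rw [mul_sum]
  exact sum_le_sum fun i hi => by
    rw [mul_comm]; exact mul_le_mul_of_nonneg_left (inf'_le a hi) (hw i hi)

/-- Nonconvex gradient-descent rate with step sizes `γ_i = i^{-1/2}`:
`min_{0 ≤ j < k} ‖∇f(z_j)‖² ≤ (f(z₀) - f* + (L C₀²/2)(1 + log k)) / √k`. -/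
theorem gd_min_grad_rate
    (p : ℕ) (f : EuclideanSpace ℝ (Fin p) → ℝ) (L fstar C₀ : ℝ)
    (hf : ContDiff ℝ 1 f) (hL : 0 < L)
    (hLip : ∀ z_w z_u : EuclideanSpace ℝ (Fin p),
      ‖gradient f z_w - gradient f z_u‖ ≤ L * ‖z_w - z_u‖)
    (hbelow : ∀ z, fstar ≤ f z)
    (hgradbdd : ∀ z, ‖gradient f z‖ ≤ C₀)
    (z : ℕ → EuclideanSpace ℝ (Fin p))
    (hz : ∀ i : ℕ, 1 ≤ i →
      z i = z (i - 1) - ((i : ℝ) ^ (-(1/2 : ℝ))) • gradient f (z (i - 1))) :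
    ∀ k : ℕ, ∀ hk : 1 ≤ k,
      ((Finset.range k).inf' (Finset.nonempty_range_iff.mpr (by omega))
          fun j => ‖gradient f (z j)‖ ^ 2)
        ≤ (f (z 0) - fstar + (L * C₀ ^ 2 / 2) * (1 + Real.log k)) / Real.sqrt k := by
  intro k hk
  set γ : ℕ → ℝ := fun j => ((j : ℝ) + 1) ^ (-(1 / 2 : ℝ))
  have hγ_sq : ∀ j, γ j ^ 2 = ((j : ℝ) + 1)⁻¹ := fun j => by
    rw [← Real.rpow_natCast, ← Real.rpow_mul (by positivity)]; norm_num [Real.rpow_neg_one]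
  have hdescent := sum_mul_norm_sq_gradient_le (hf.differentiable one_ne_zero) hLip
    (z := z) (γ := γ) (fun j => by simpa [γ] using hz (j + 1) (by omega)) k
  have hnoise : ∑ j ∈ range k, γ j ^ 2 * ‖gradient f (z j)‖ ^ 2 ≤ C₀ ^ 2 * (1 + Real.log k) :=
    calc _ ≤ ∑ j ∈ range k, C₀ ^ 2 * ((j : ℝ) + 1)⁻¹ :=
          sum_le_sum fun j _ => by rw [hγ_sq, mul_comm]; gcongr; exact hgradbdd _
      _ ≤ _ := by rw [← mul_sum]; gcongr; exact sum_range_inv_succ_le_one_add_log k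
  rw [le_div_iff₀ (by positivity)]
  calc _ ≤ (range k).inf' _ (fun j => ‖gradient f (z j)‖ ^ 2) * ∑ j ∈ range k, γ j := by
        gcongr
        · exact le_inf' _ _ fun j _ => by positivity
        · exact sqrt_le_sum_range_rpow_neg_half k
    _ ≤ ∑ j ∈ range k, γ j * ‖gradient f (z j)‖ ^ 2 :=
        inf'_mul_sum_le_sum_mul _ _ _ fun j _ => by positivity
    _ ≤ _ := by
        have hnoise' := mul_le_mul_of_nonneg_left hnoise (by positivity : 0 ≤ L / 2)
        linarith [hbelow (z k)]
end

section
/- Let L : ℝ^p → ℝ satisfy Assumption: ‖∇L‖ ≤ C₀, ‖∇²L‖ ≤ C₁, and ∇²L is C₂-Lipschitz. Let L' : ℝ^p → ℝ satisfy the same bounds. Define Φ(z) = L'(z^{(N)}) where z^{(N)} is the result of N gradient-descent steps on L with step β from z. Then ∇Φ is Lipschitz with constant at most C₁(1+βC₁)^{2N} + N β C₂ (1+βC₁)^{N-1} C₀ · (1+βC₁)^{N}; in particular ∇Φ is Lipschitz continuous. -/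
/-!
By the chain rule, `Φ` has derivative `z ↦ ∇L'(z⁽ᴺ⁾)ᵀ ∘ D_N(z)`, where `D_n` is the derivative of
the `n`-th gradient-descent iterate, `D_{n+1}(z) = (I - β∇²L(z⁽ⁿ⁾)) ∘ D_n(z)`. Each factor
`I - β∇²L` is bounded by `A = 1 + βC₁` and `βC₂`-Lipschitz, so the product rule
`‖B₁A₁ - B₂A₂‖ ≤ ‖B₁ - B₂‖‖A₁‖ + ‖B₂‖‖A₁ - A₂‖`, together with the mean value inequality for the
`Aⁿ`-Lipschitz iterates, shows by induction that `D_n` is bounded by `Aⁿ` and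
`nβC₂Aⁿ⁻¹Aⁿ`-Lipschitz. One more application of the product rule, with `∇L'` bounded by `C₀` and
`C₁`-Lipschitz, gives the constant `C₁A²ᴺ + C₀·NβC₂Aᴺ⁻¹Aᴺ`.
-/

theorem ContinuousLinearMap.norm_comp_sub_comp_le {𝕜 E F G : Type*} [NontriviallyNormedField 𝕜]
    [NormedAddCommGroup E] [NormedSpace 𝕜 E] [NormedAddCommGroup F] [NormedSpace 𝕜 F]
    [NormedAddCommGroup G] [NormedSpace 𝕜 G] (B₁ B₂ : F →L[𝕜] G) (A₁ A₂ : E →L[𝕜] F) :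
    ‖B₁.comp A₁ - B₂.comp A₂‖ ≤ ‖B₁ - B₂‖ * ‖A₁‖ + ‖B₂‖ * ‖A₁ - A₂‖ :=
  calc ‖B₁.comp A₁ - B₂.comp A₂‖ = ‖(B₁ - B₂).comp A₁ + B₂.comp (A₁ - A₂)‖ := by
        congr 1; ext; simp
    _ ≤ _ := (norm_add_le _ _).trans (add_le_add (opNorm_comp_le _ _) (opNorm_comp_le _ _))

section

variable {E F G : Type*} [NormedAddCommGroup E] [NormedSpace ℝ E] [NormedAddCommGroup F]
  [NormedSpace ℝ F] [NormedAddCommGroup G] [NormedSpace ℝ G]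

theorem norm_sub_le_of_forall_hasFDerivAt_norm_le {f : E → F} {f' : E → E →L[ℝ] F} {C : ℝ}
    (hf : ∀ x, HasFDerivAt f (f' x) x) (hC : ∀ x, ‖f' x‖ ≤ C) (x y : E) :
    ‖f x - f y‖ ≤ C * ‖x - y‖ :=
  convex_univ.norm_image_sub_le_of_norm_hasFDerivWithin_le
    (fun z _ => (hf z).hasFDerivWithinAt) (fun z _ => hC z) (Set.mem_univ y) (Set.mem_univ x)

theorem norm_chain_deriv_sub_le {f : E → F} {f' : E → E →L[ℝ] F} {g' : F → F →L[ℝ] G}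
    {a b Kf Kg : ℝ} (hf : ∀ x, HasFDerivAt f (f' x) x) (hf'a : ∀ x, ‖f' x‖ ≤ a)
    (hf'K : ∀ x y, ‖f' x - f' y‖ ≤ Kf * ‖x - y‖) (hg'b : ∀ y, ‖g' y‖ ≤ b)
    (hg'K : ∀ x y, ‖g' x - g' y‖ ≤ Kg * ‖x - y‖) (hKg : 0 ≤ Kg) (x y : E) :
    ‖(g' (f x)).comp (f' x) - (g' (f y)).comp (f' y)‖ ≤ (Kg * a * a + b * Kf) * ‖x - y‖ := by
  have ha : 0 ≤ a := (norm_nonneg _).trans (hf'a x)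
  calc _ ≤ ‖g' (f x) - g' (f y)‖ * ‖f' x‖ + ‖g' (f y)‖ * ‖f' x - f' y‖ :=
        ContinuousLinearMap.norm_comp_sub_comp_le _ _ _ _
    _ ≤ Kg * (a * ‖x - y‖) * a + b * (Kf * ‖x - y‖) := by
        gcongr
        · exact (hg'K _ _).trans
            (by gcongr; exact norm_sub_le_of_forall_hasFDerivAt_norm_le hf hf'a x y)
        · exact hf'a x
        · exact (norm_nonneg _).trans (hg'b (f y))
        · exact hg'b _
        · exact hf'K x y
    _ = (Kg * a * a + b * Kf) * ‖x - y‖ := by ring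

theorem exists_hasFDerivAt_iterate_lipschitz {T : E → E} {T' : E → E →L[ℝ] E} {A K : ℝ}
    (hT : ∀ x, HasFDerivAt T (T' x) x) (hA : 1 ≤ A) (hK : 0 ≤ K) (hT'A : ∀ x, ‖T' x‖ ≤ A)
    (hT'K : ∀ x y, ‖T' x - T' y‖ ≤ K * ‖x - y‖) (n : ℕ) :
    ∃ D : E → E →L[ℝ] E, (∀ x, HasFDerivAt T^[n] (D x) x) ∧ (∀ x, ‖D x‖ ≤ A ^ n) ∧
      ∀ x y, ‖D x - D y‖ ≤ n * K * A ^ (n - 1) * A ^ n * ‖x - y‖ := by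
  induction n with
  | zero =>
    exact ⟨fun _ => ContinuousLinearMap.id ℝ E, hasFDerivAt_id,
      fun _ => by simpa using ContinuousLinearMap.norm_id_le, fun _ _ => by simp⟩
  | succ n ih =>
    obtain ⟨D, hD, hDA, hDK⟩ := ih
    refine ⟨fun x => (T' (T^[n] x)).comp (D x), fun x => ?_, fun x => ?_, fun x y => ?_⟩
    · rw [Function.iterate_succ']
      exact (hT _).comp x (hD x)
    · calc _ ≤ ‖T' (T^[n] x)‖ * ‖D x‖ := ContinuousLinearMap.opNorm_comp_le _ _
        _ ≤ A * A ^ n := by gcongr; exacts [hT'A _, hDA x]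
        _ = A ^ (n + 1) := (pow_succ' A n).symm
    · have hAn : A * (n * A ^ (n - 1)) = n * A ^ n := by
        rcases n with _ | n
        · simp
        · simp only [Nat.add_sub_cancel, pow_succ]; ring
      have hmono : A ^ n ≤ A ^ (n + 1) := pow_le_pow_right₀ hA n.le_succ
      refine (norm_chain_deriv_sub_le hD hDA hDK hT'A hT'K hK x y).trans ?_
      gcongr
      calc K * A ^ n * A ^ n + A * (n * K * A ^ (n - 1) * A ^ n)
          = (n + 1) * K * A ^ n * A ^ n := by linear_combination K * A ^ n * hAn
        _ ≤ (n + 1) * K * A ^ n * A ^ (n + 1) := by gcongr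
        _ = _ := by push_cast; simp

theorem ContinuousLinearMap.norm_id_sub_smul_le {β C : ℝ} (hβ : 0 ≤ β) {H : E →L[ℝ] E}
    (hH : ‖H‖ ≤ C) : ‖ContinuousLinearMap.id ℝ E - β • H‖ ≤ 1 + β * C :=
  calc _ ≤ ‖ContinuousLinearMap.id ℝ E‖ + ‖β • H‖ := norm_sub_le _ _
    _ ≤ 1 + β * C := by
      rw [norm_smul, Real.norm_of_nonneg hβ]
      gcongr
      exact norm_id_le

end

section

variable {F : Type*} [NormedAddCommGroup F] [InnerProductSpace ℝ F] [CompleteSpace F]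

theorem ContDiff.differentiable_gradient {f : F → ℝ} (hf : ContDiff ℝ 2 f) :
    Differentiable ℝ (gradient f) :=
  (InnerProductSpace.toDual ℝ F).symm.toContinuousLinearEquiv.differentiable.comp
    ((hf.fderiv_right (m := 1) le_rfl).differentiable one_ne_zero)

theorem norm_fderiv_eq_norm_gradient (f : F → ℝ) (x : F) : ‖fderiv ℝ f x‖ = ‖gradient f x‖ := by
  rw [← toDual_gradient, LinearIsometryEquiv.norm_map]

theorem norm_fderiv_sub_fderiv_eq (f : F → ℝ) (x y : F) :
    ‖fderiv ℝ f x - fderiv ℝ f y‖ = ‖gradient f x - gradient f y‖ := by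
  rw [← toDual_gradient, ← toDual_gradient, ← map_sub, LinearIsometryEquiv.norm_map]

theorem norm_fderiv_sub_fderiv_le_of_norm_hessian_le {f : F → ℝ} {C : ℝ} (hf : ContDiff ℝ 2 f)
    (hC : ∀ x, ‖fderiv ℝ (gradient f) x‖ ≤ C) (x y : F) :
    ‖fderiv ℝ f x - fderiv ℝ f y‖ ≤ C * ‖x - y‖ := by
  rw [norm_fderiv_sub_fderiv_eq]
  exact norm_sub_le_of_forall_hasFDerivAt_norm_le
    (fun z => (hf.differentiable_gradient z).hasFDerivAt) hC x y

theorem ContDiff.hasFDerivAt_sub_smul_gradient {f : F → ℝ} (hf : ContDiff ℝ 2 f) (β : ℝ)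
    (x : F) : HasFDerivAt (fun z => z - β • gradient f z)
      (ContinuousLinearMap.id ℝ F - β • fderiv ℝ (gradient f) x) x :=
  (hasFDerivAt_id x).sub ((hf.differentiable_gradient x).hasFDerivAt.const_smul β)

end

theorem meta_objective_grad_lipschitz_general
    (p : ℕ) (L L' : EuclideanSpace ℝ (Fin p) → ℝ) (β C₀ C₁ C₂ : ℝ) (N : ℕ)
    (hL : ContDiff ℝ 2 L) (hL' : ContDiff ℝ 2 L')
    (hβ : 0 < β) (hC₁ : 0 < C₁) (hC₂ : 0 < C₂)
    (hgradL' : ∀ z : EuclideanSpace ℝ (Fin p), ‖gradient L' z‖ ≤ C₀)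
    (hHessL : ∀ z : EuclideanSpace ℝ (Fin p), ‖fderiv ℝ (gradient L) z‖ ≤ C₁)
    (hHessL' : ∀ z : EuclideanSpace ℝ (Fin p), ‖fderiv ℝ (gradient L') z‖ ≤ C₁)
    (hHessLipL : ∀ z_w z_u : EuclideanSpace ℝ (Fin p),
      ‖fderiv ℝ (gradient L) z_w - fderiv ℝ (gradient L) z_u‖ ≤ C₂ * ‖z_w - z_u‖)
    (step : EuclideanSpace ℝ (Fin p) → EuclideanSpace ℝ (Fin p))
    (hstep : ∀ z, step z = z - β • gradient L z)
    (Φ : EuclideanSpace ℝ (Fin p) → ℝ)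
    (hΦ : ∀ z, Φ z = L' (step^[N] z)) :
    ∀ z_w z_u : EuclideanSpace ℝ (Fin p),
      ‖gradient Φ z_w - gradient Φ z_u‖
        ≤ (C₁ * (1 + β * C₁) ^ (2 * N)
            + N * β * C₂ * (1 + β * C₁) ^ (N - 1) * C₀ * (1 + β * C₁) ^ N)
          * ‖z_w - z_u‖ := by
  set S := fun z => ContinuousLinearMap.id ℝ _ - β • fderiv ℝ (gradient L) z
  have hT : ∀ z, HasFDerivAt step (S z) z := by
    rw [show step = _ from funext hstep]
    exact hL.hasFDerivAt_sub_smul_gradient β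
  have hSA : ∀ z, ‖S z‖ ≤ 1 + β * C₁ := fun z =>
    ContinuousLinearMap.norm_id_sub_smul_le hβ.le (hHessL z)
  have hSK : ∀ z_w z_u, ‖S z_w - S z_u‖ ≤ β * C₂ * ‖z_w - z_u‖ := fun z_w z_u => by
    rw [show S z_w - S z_u = β • (fderiv ℝ (gradient L) z_u - fderiv ℝ (gradient L) z_w) by
      simp only [S, smul_sub]; abel, norm_smul, Real.norm_of_nonneg hβ.le, norm_sub_rev z_w,
      mul_assoc]
    exact mul_le_mul_of_nonneg_left (hHessLipL z_u z_w) hβ.le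
  obtain ⟨D, hD, hDA, hDK⟩ := exists_hasFDerivAt_iterate_lipschitz hT
    (le_add_of_nonneg_right (by positivity)) (by positivity) hSA hSK N
  have hΦD : ∀ z, HasFDerivAt Φ ((fderiv ℝ L' (step^[N] z)).comp (D z)) z := by
    rw [show Φ = _ from funext hΦ]
    exact fun z => (hL'.differentiable two_ne_zero _).hasFDerivAt.comp z (hD z)
  intro z_w z_u
  rw [← norm_fderiv_sub_fderiv_eq, (hΦD z_w).fderiv, (hΦD z_u).fderiv]
  refine (norm_chain_deriv_sub_le hD hDA hDK
    (fun z => (norm_fderiv_eq_norm_gradient L' z).trans_le (hgradL' z))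
    (norm_fderiv_sub_fderiv_le_of_norm_hessian_le hL' hHessL') hC₁.le z_w z_u).trans_eq ?_
  ring

/-- Smoothness of the N-step meta-objective `Φ(z) = L'(GD_L^N(z))`: its gradient is
Lipschitz with the explicit constant
`C₁(1+βC₁)^{2N} + NβC₂(1+βC₁)^{N-1}C₀(1+βC₁)^N`. -/
theorem meta_objective_grad_lipschitz
    (p : ℕ) (L L' : EuclideanSpace ℝ (Fin p) → ℝ) (β C₀ C₁ C₂ : ℝ) (N : ℕ)
    (hL : ContDiff ℝ 2 L) (hL' : ContDiff ℝ 2 L')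
    (hβ : 0 < β) (hC₀ : 0 < C₀) (hC₁ : 0 < C₁) (hC₂ : 0 < C₂)
    (hgradL : ∀ z : EuclideanSpace ℝ (Fin p), ‖gradient L z‖ ≤ C₀)
    (hgradL' : ∀ z : EuclideanSpace ℝ (Fin p), ‖gradient L' z‖ ≤ C₀)
    (hHessL : ∀ z : EuclideanSpace ℝ (Fin p), ‖fderiv ℝ (gradient L) z‖ ≤ C₁)
    (hHessL' : ∀ z : EuclideanSpace ℝ (Fin p), ‖fderiv ℝ (gradient L') z‖ ≤ C₁)
    (hHessLipL : ∀ z_w z_u : EuclideanSpace ℝ (Fin p),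
      ‖fderiv ℝ (gradient L) z_w - fderiv ℝ (gradient L) z_u‖ ≤ C₂ * ‖z_w - z_u‖)
    (hHessLipL' : ∀ z_w z_u : EuclideanSpace ℝ (Fin p),
      ‖fderiv ℝ (gradient L') z_w - fderiv ℝ (gradient L') z_u‖ ≤ C₂ * ‖z_w - z_u‖)
    (step : EuclideanSpace ℝ (Fin p) → EuclideanSpace ℝ (Fin p))
    (hstep : ∀ z, step z = z - β • gradient L z)
    (Φ : EuclideanSpace ℝ (Fin p) → ℝ)
    (hΦ : ∀ z, Φ z = L' (step^[N] z)) :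
    ∀ z_w z_u : EuclideanSpace ℝ (Fin p),
      ‖gradient Φ z_w - gradient Φ z_u‖
        ≤ (C₁ * (1 + β * C₁) ^ (2 * N)
            + N * β * C₂ * (1 + β * C₁) ^ (N - 1) * C₀ * (1 + β * C₁) ^ N)
          * ‖z_w - z_u‖ :=
  meta_objective_grad_lipschitz_general p L L' β C₀ C₁ C₂ N hL hL' hβ hC₁ hC₂ hgradL' hHessL hHessL'
    hHessLipL step hstep Φ hΦ
end
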